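/- (Proposition P2) Assume ν̄ᵢ > 0 for all i, U is positive definite and X is positive semidefinite, so that M(X) = Σ_{I⊆{1,…,m}} η_I² N_I (U + Bᵀ X B) N_I is positive definite. With K̄_X = −Aᵀ X B N̄ M(X)⁻¹, for every real n×m matrix K one has φ(K̄_X, X) ⪯ φ(K, X) in the Loewner order; consequently the Loewner minimum g_{N̄}(X) = min_K φ(K,X) exists and equals Π_c(X) = Aᵀ X A + W − Aᵀ X B N̄ M(X)⁻¹ N̄ Bᵀ X A. -/

import Mathlib

open Matrix

/-- The scalar η_I = √(∏_{i∈I} ν̄ᵢ · ∏_{i∉I}(1−ν̄ᵢ)). -/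
noncomputable def eta {m : ℕ} (ν : Fin m → ℝ) (I : Finset (Fin m)) : ℝ :=
  Real.sqrt ((∏ i ∈ I, ν i) * (∏ i ∈ Iᶜ, (1 - ν i)))

/-- The m×m diagonal 0/1 matrix N_I whose i-th diagonal entry is 1 exactly when i ∈ I. -/
def NI {m : ℕ} (I : Finset (Fin m)) : Matrix (Fin m) (Fin m) ℝ :=
  Matrix.diagonal fun i => if i ∈ I then 1 else 0

/-- φ(K,X) = Σ_{I⊆{1,…,m}} η_I² (F_I(K) X F_I(K)ᵀ + V_I(K)), where
F_I(K) = Aᵀ + K N_I Bᵀ and V_I(K) = W + K N_I U N_I Kᵀ. -/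
noncomputable def phi {m n : ℕ} (ν : Fin m → ℝ) (A W : Matrix (Fin n) (Fin n) ℝ)
    (B : Matrix (Fin n) (Fin m) ℝ) (U : Matrix (Fin m) (Fin m) ℝ)
    (K : Matrix (Fin n) (Fin m) ℝ) (X : Matrix (Fin n) (Fin n) ℝ) :
    Matrix (Fin n) (Fin n) ℝ :=
  ∑ I : Finset (Fin m), (eta ν I) ^ 2 •
    ((Aᵀ + K * NI I * Bᵀ) * X * (Aᵀ + K * NI I * Bᵀ)ᵀ + (W + K * NI I * U * NI I * Kᵀ))

/-- M(X) = Σ_{I⊆{1,…,m}} η_I² N_I (U + Bᵀ X B) N_I. -/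
noncomputable def Mop {m n : ℕ} (ν : Fin m → ℝ) (B : Matrix (Fin n) (Fin m) ℝ)
    (U : Matrix (Fin m) (Fin m) ℝ) (X : Matrix (Fin n) (Fin n) ℝ) :
    Matrix (Fin m) (Fin m) ℝ :=
  ∑ I : Finset (Fin m), (eta ν I) ^ 2 • (NI I * (U + Bᵀ * X * B) * NI I)

/-- The modified algebraic Riccati operator
Π_c(X) = Aᵀ X A + W − Aᵀ X B N̄ M(X)⁻¹ N̄ Bᵀ X A, where N̄ = diag(ν̄₁,…,ν̄ₘ). -/
noncomputable def Pic {m n : ℕ} (ν : Fin m → ℝ) (A W : Matrix (Fin n) (Fin n) ℝ)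
    (B : Matrix (Fin n) (Fin m) ℝ) (U : Matrix (Fin m) (Fin m) ℝ)
    (X : Matrix (Fin n) (Fin n) ℝ) : Matrix (Fin n) (Fin n) ℝ :=
  Aᵀ * X * A + W -
    Aᵀ * X * B * Matrix.diagonal ν * (Mop ν B U X)⁻¹ * Matrix.diagonal ν * Bᵀ * X * A

/-! The weights η_I² are the probabilities of a random subset I in which each i is included
independently with probability ν̄ᵢ, so `∑ η_I² = 1` and `∑ η_I² N_I = N̄`. Hence φ(·, X) is the
matrix quadratic `AᵀXA + W + C Kᵀ + K Cᵀ + K M(X) Kᵀ` with `C = AᵀXBN̄`. The term `I = univ` of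
`M(X)` is `η_univ² (U + BᵀXB) ≻ 0`, so `M(X)` is positive definite and completing the square gives
`φ(K, X) = Π_c(X) + (K - K̄_X) M(X) (K - K̄_X)ᵀ`. -/

namespace Matrix

variable {R ι κ : Type*} [CommRing R] [Fintype κ] [DecidableEq κ]

theorem complete_square {M : Matrix κ κ R} (hM : IsUnit M.det) (hMt : Mᵀ = M)
    (C K : Matrix ι κ R) :
    C * Kᵀ + K * Cᵀ + K * M * Kᵀ = (K + C * M⁻¹) * M * (K + C * M⁻¹)ᵀ - C * M⁻¹ * Cᵀ := by
  have hMinv : (M⁻¹)ᵀ = M⁻¹ := by rw [transpose_nonsing_inv, hMt]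
  simp only [transpose_add, transpose_mul, hMinv, Matrix.add_mul, Matrix.mul_add, Matrix.mul_assoc,
    nonsing_inv_mul_cancel_left _ _ hM, mul_nonsing_inv_cancel_left _ _ hM]
  abel

end Matrix

theorem Fintype.sum_ite_mem_prod_mul_prod_compl_one_sub {ι R : Type*} [Fintype ι] [DecidableEq ι]
    [CommRing R] (a : ι → R) (i : ι) :
    ∑ t : Finset ι, (if i ∈ t then (∏ k ∈ t, a k) * ∏ k ∈ tᶜ, (1 - a k) else 0) = a i := by
  -- replacing the factor `1 - a i` by `0` kills exactly the subsets not containing `i`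
  have hterm : ∀ t : Finset ι, (if i ∈ t then (∏ k ∈ t, a k) * ∏ k ∈ tᶜ, (1 - a k) else 0) =
      (∏ k ∈ t, a k) * ∏ k ∈ tᶜ, (if k = i then 0 else 1 - a k) := by
    intro t
    split_ifs with hi
    · congr 1
      exact Finset.prod_congr rfl fun k hk => (if_neg (by rintro rfl; simp_all)).symm
    · rw [Finset.prod_eq_zero (Finset.mem_compl.mpr hi) (by simp), mul_zero]
  simp_rw [hterm, ← Fintype.prod_add]
  calc ∏ k, (a k + if k = i then 0 else 1 - a k) = ∏ k, (if k = i then a i else 1) :=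
        Finset.prod_congr rfl fun k _ => by split_ifs with hk <;> simp [hk]
    _ = a i := by simp

section

open Finset

variable {m n : ℕ}

theorem eta_sq {ν : Fin m → ℝ} (hν : ∀ i, ν i ∈ Set.Icc (0 : ℝ) 1) (I : Finset (Fin m)) :
    eta ν I ^ 2 = (∏ i ∈ I, ν i) * ∏ i ∈ Iᶜ, (1 - ν i) :=
  Real.sq_sqrt <| mul_nonneg (prod_nonneg fun i _ => (hν i).1)
    (prod_nonneg fun i _ => sub_nonneg.mpr (hν i).2)

theorem eta_univ_pos {ν : Fin m → ℝ} (hν : ∀ i, 0 < ν i) : 0 < eta ν univ :=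
  Real.sqrt_pos.mpr <| by simpa using prod_pos fun i _ => hν i

theorem sum_eta_sq {ν : Fin m → ℝ} (hν : ∀ i, ν i ∈ Set.Icc (0 : ℝ) 1) :
    ∑ I, eta ν I ^ 2 = 1 := by
  simp_rw [eta_sq hν, ← Fintype.prod_add, add_sub_cancel, prod_const_one]

theorem sum_eta_sq_smul_NI {ν : Fin m → ℝ} (hν : ∀ i, ν i ∈ Set.Icc (0 : ℝ) 1) :
    ∑ I, eta ν I ^ 2 • NI I = diagonal ν := by
  ext i j
  rcases eq_or_ne i j with rfl | hij
  · simp [Matrix.sum_apply, NI, eta_sq hν, Fintype.sum_ite_mem_prod_mul_prod_compl_one_sub]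
  · simp [Matrix.sum_apply, NI, hij]

@[simp]
theorem NI_transpose (I : Finset (Fin m)) : (NI I)ᵀ = NI I :=
  diagonal_transpose _

@[simp]
theorem NI_univ : NI (univ : Finset (Fin m)) = 1 := by
  simp [NI]

theorem posDef_Mop {ν : Fin m → ℝ} (hν : ∀ i, 0 < ν i) {B : Matrix (Fin n) (Fin m) ℝ}
    {U : Matrix (Fin m) (Fin m) ℝ} (hU : U.PosDef) {X : Matrix (Fin n) (Fin n) ℝ}
    (hX : X.PosSemidef) : (Mop ν B U X).PosDef := by
  have hQ : (U + Bᵀ * X * B).PosDef :=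
    hU.add_posSemidef (by simpa using hX.conjTranspose_mul_mul_same B)
  rw [Mop, ← sum_erase_add _ _ (mem_univ univ)]
  refine PosDef.posSemidef_add (posSemidef_sum _ fun I _ => ?_) ?_
  · exact (by simpa using hQ.posSemidef.mul_mul_conjTranspose_same (NI I) :
      (NI I * (U + Bᵀ * X * B) * NI I).PosSemidef).smul (sq_nonneg _)
  · simpa using hQ.smul (pow_pos (eta_univ_pos hν) 2)

theorem phi_eq {ν : Fin m → ℝ} (hν : ∀ i, ν i ∈ Set.Icc (0 : ℝ) 1)
    (A W : Matrix (Fin n) (Fin n) ℝ) (B : Matrix (Fin n) (Fin m) ℝ)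
    (U : Matrix (Fin m) (Fin m) ℝ) (K : Matrix (Fin n) (Fin m) ℝ) (X : Matrix (Fin n) (Fin n) ℝ) :
    phi ν A W B U K X = Aᵀ * X * A + W + Aᵀ * X * B * diagonal ν * Kᵀ
      + K * (diagonal ν * Bᵀ * X * A) + K * Mop ν B U X * Kᵀ := by
  have hterm : ∀ I : Finset (Fin m),
      eta ν I ^ 2 • ((Aᵀ + K * NI I * Bᵀ) * X * (Aᵀ + K * NI I * Bᵀ)ᵀ
        + (W + K * NI I * U * NI I * Kᵀ)) =
      eta ν I ^ 2 • (Aᵀ * X * A + W) + Aᵀ * X * B * (eta ν I ^ 2 • NI I) * Kᵀ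
        + K * (eta ν I ^ 2 • NI I) * (Bᵀ * X * A)
        + K * (eta ν I ^ 2 • (NI I * (U + Bᵀ * X * B) * NI I)) * Kᵀ := by
    intro I
    simp only [Matrix.mul_smul, Matrix.smul_mul, ← smul_add]
    congr 1
    simp only [transpose_add, transpose_mul, transpose_transpose, NI_transpose, Matrix.add_mul,
      Matrix.mul_add, Matrix.mul_assoc]
    abel
  rw [phi, sum_congr rfl fun I _ => hterm I]
  simp only [sum_add_distrib, ← sum_smul, ← Matrix.sum_mul, ← Matrix.mul_sum,
    sum_eta_sq hν, sum_eta_sq_smul_NI hν, one_smul, Mop, Matrix.mul_assoc]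

theorem phi_eq_Pic_add {ν : Fin m → ℝ} (hν : ∀ i, ν i ∈ Set.Icc (0 : ℝ) 1)
    {A W : Matrix (Fin n) (Fin n) ℝ} {B : Matrix (Fin n) (Fin m) ℝ}
    {U : Matrix (Fin m) (Fin m) ℝ} {X : Matrix (Fin n) (Fin n) ℝ} (hX : Xᵀ = X)
    (hM : (Mop ν B U X).PosDef) (K : Matrix (Fin n) (Fin m) ℝ) :
    phi ν A W B U K X = Pic ν A W B U X +
      (K + Aᵀ * X * B * diagonal ν * (Mop ν B U X)⁻¹) * Mop ν B U X *
        (K + Aᵀ * X * B * diagonal ν * (Mop ν B U X)⁻¹)ᵀ := by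
  have hC : (Aᵀ * X * B * diagonal ν)ᵀ = diagonal ν * Bᵀ * X * A := by
    simp only [transpose_mul, transpose_transpose, diagonal_transpose, hX, Matrix.mul_assoc]
  have hMt : (Mop ν B U X)ᵀ = Mop ν B U X := by
    simpa [conjTranspose_eq_transpose_of_trivial] using hM.1.eq
  rw [phi_eq hν, ← hC, add_assoc _ _ (K * _), add_assoc (Aᵀ * X * A + W),
    complete_square hM.det_pos.ne'.isUnit hMt, Pic, hC]
  simp only [Matrix.mul_assoc]
  abel

end

theorem phi_min_eq_Pic_general (m n : ℕ) (ν : Fin m → ℝ)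
    (hν : ∀ i, ν i ∈ Set.Ioc (0 : ℝ) 1)
    (A W : Matrix (Fin n) (Fin n) ℝ) (B : Matrix (Fin n) (Fin m) ℝ)
    (U : Matrix (Fin m) (Fin m) ℝ) (hU : U.PosDef)
    (X : Matrix (Fin n) (Fin n) ℝ) (hX : X.PosSemidef) :
    (Mop ν B U X).PosDef ∧
    (∀ K : Matrix (Fin n) (Fin m) ℝ,
      (phi ν A W B U K X -
        phi ν A W B U (-(Aᵀ * X * B * Matrix.diagonal ν * (Mop ν B U X)⁻¹)) X).PosSemidef) ∧
    phi ν A W B U (-(Aᵀ * X * B * Matrix.diagonal ν * (Mop ν B U X)⁻¹)) X =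
      Pic ν A W B U X := by
  have hM : (Mop ν B U X).PosDef := posDef_Mop (fun i => (hν i).1) hU hX
  have hphi := phi_eq_Pic_add (A := A) (W := W) (fun i => Set.Ioc_subset_Icc_self (hν i))
    (by simpa [conjTranspose_eq_transpose_of_trivial] using hX.1.eq) hM
  have hmin : phi ν A W B U (-(Aᵀ * X * B * diagonal ν * (Mop ν B U X)⁻¹)) X =
      Pic ν A W B U X := by
    simp [hphi]
  refine ⟨hM, fun K => ?_, hmin⟩
  rw [hmin, hphi K, add_sub_cancel_left]
  simpa [conjTranspose_eq_transpose_of_trivial] using hM.posSemidef.mul_mul_conjTranspose_same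
    (K + Aᵀ * X * B * diagonal ν * (Mop ν B U X)⁻¹)

/-- Proposition P2: with ν̄ᵢ ∈ (0,1], U positive definite,
W positive semidefinite and X positive semidefinite, M(X) is positive definite,
K̄_X = −Aᵀ X B N̄ M(X)⁻¹ is a Loewner minimizer of K ↦ φ(K,X), and the minimum
value g_{N̄}(X) = φ(K̄_X, X) equals Π_c(X). -/
theorem phi_min_eq_Pic (m n : ℕ) (hm : 0 < m) (hn : 0 < n) (ν : Fin m → ℝ)
    (hν : ∀ i, ν i ∈ Set.Ioc (0 : ℝ) 1)
    (A W : Matrix (Fin n) (Fin n) ℝ) (B : Matrix (Fin n) (Fin m) ℝ)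
    (U : Matrix (Fin m) (Fin m) ℝ) (hW : W.PosSemidef) (hU : U.PosDef)
    (X : Matrix (Fin n) (Fin n) ℝ) (hX : X.PosSemidef) :
    (Mop ν B U X).PosDef ∧
    (∀ K : Matrix (Fin n) (Fin m) ℝ,
      (phi ν A W B U K X -
        phi ν A W B U (-(Aᵀ * X * B * Matrix.diagonal ν * (Mop ν B U X)⁻¹)) X).PosSemidef) ∧
    phi ν A W B U (-(Aᵀ * X * B * Matrix.diagonal ν * (Mop ν B U X)⁻¹)) X =
      Pic ν A W B U X :=
  phi_min_eq_Pic_general m n ν hν A W B U hU X hX
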